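/- Let 𝒯 = {𝒯⁽¹⁾,…,𝒯⁽ᵏ⁾} be a set of k rooted binary phylogenetic trees, each with at most n leaves and no internal node of degree two. For each integer r with 0 ≤ r ≤ k, the number of cut-subforests 𝒜 of 𝒯 such that exactly r of the cut-subtrees 𝒜⁽ⁱ⁾ have roots that are internal nodes of 𝒯⁽ⁱ⁾ is at most C(k,r)·(n−1)^r·(n+1)^{k−r}, and each such cut-subforest has at most 4^r·2^{k−r} bipartites. -/

import Mathlib

/-- Rooted, unordered, leaf-labelled trees:
a tree is a single labelled leaf, or an (internal) root node with a list of subtrees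
attached to it.  Being unordered, such trees are considered up to the
isomorphism `PTree.Iso` below.  The empty tree is represented by `none` in
`Option (PTree α)`. -/
inductive PTree (α : Type) : Type where
  | leaf : α → PTree α
  | node : List (PTree α) → PTree α

namespace PTree

variable {α : Type} [DecidableEq α]

theorem sizeOf_lt_of_mem {α : Type} {c : PTree α} {cs : List (PTree α)}
    (h : c ∈ cs) : sizeOf c < sizeOf (PTree.node cs) := by
  have := List.sizeOf_lt_of_mem h
  simp only [node.sizeOf_spec]; omega

/-- `Subtree s t` : `s` is the complete subtree rooted at some node of `t`. -/
inductive Subtree : PTree α → PTree α → Prop where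
  | refl (t : PTree α) : Subtree t t
  | child {s c : PTree α} {cs : List (PTree α)} :
      c ∈ cs → Subtree s c → Subtree s (node cs)

/-- The list of leaf labels of a tree. -/
def labelList : PTree α → List α
  | leaf a => [a]
  | node cs => cs.attach.flatMap (fun c => labelList c.1)
decreasing_by exact sizeOf_lt_of_mem c.2

/-- The set `L(T)` of leaf labels of a tree. -/
def labels (t : PTree α) : Finset α := t.labelList.toFinset

/-- The size of a tree: the number of its leaves. -/
def treeSize (t : PTree α) : ℕ := t.labels.card

/-- The label set of a possibly empty tree. -/
def olabels : Option (PTree α) → Finset α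
  | none => ∅
  | some t => t.labels

/-- Connecting a list of trees by a common root.  The empty list yields the
empty tree and a single tree yields that tree itself (no degree-two node is
created). -/
def connect : List (PTree α) → Option (PTree α)
  | [] => none
  | [t] => some t
  | ts => some (node ts)

/-- The restriction `T|S` of `T` to a label set `S`: all leaves with labels
outside `S` are removed and all internal nodes of degree two are suppressed. -/
def restrict (S : Finset α) : PTree α → Option (PTree α)
  | leaf a => if a ∈ S then some (leaf a) else none
  | node cs => connect ((cs.attach.map (fun c => restrict S c.1)).reduceOption)
decreasing_by exact sizeOf_lt_of_mem c.2

/-- Restriction of a possibly empty tree. -/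
def orestrict (S : Finset α) (t : Option (PTree α)) : Option (PTree α) :=
  t.bind (restrict S)

/-- Isomorphism (equality) of unordered leaf-labelled trees: equality of trees
up to reordering of the children of each node. -/
inductive Iso : PTree α → PTree α → Prop where
  | leaf (a : α) : Iso (leaf a) (leaf a)
  | node {cs ds ds' : List (PTree α)} :
      List.Forall₂ Iso cs ds' → ds'.Perm ds → Iso (node cs) (node ds)

/-- One edge contraction: the edge between a node and one of its (internal)
children is contracted, merging the child into the parent. -/
inductive Contract : PTree α → PTree α → Prop where
  | top (l r ds : List (PTree α)) :
      Contract (node (l ++ node ds :: r)) (node (l ++ ds ++ r))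
  | child {c c' : PTree α} (l r : List (PTree α)) :
      Contract c c' → Contract (node (l ++ c :: r)) (node (l ++ c' :: r))

/-- `T` refines `T'` (written `T ⊵ T'`): `T'` can be obtained (as an
unordered tree) by contracting some edges of `T`. -/
def Refines (t t' : PTree α) : Prop :=
  ∃ u, Relation.ReflTransGen Contract t u ∧ Iso u t'

/-- Refinement of possibly empty trees. -/
def ORefines : Option (PTree α) → Option (PTree α) → Prop
  | none, none => True
  | some a, some b => Refines a b
  | _, _ => False

/-- Isomorphism (equality) of possibly empty unordered trees. -/
def OIso : Option (PTree α) → Option (PTree α) → Prop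
  | none, none => True
  | some a, some b => Iso a b
  | _, _ => False

/-- A possibly empty tree is (empty or) a complete subtree of `T`. -/
def OSubtree (T : PTree α) : Option (PTree α) → Prop
  | none => True
  | some t => Subtree t T

/-- No internal node of degree two (after the usual suppression convention):
every internal node of the rooted tree has at least two children. -/
def NoUnaryNodes (T : PTree α) : Prop :=
  ∀ cs : List (PTree α), Subtree (node cs) T → 2 ≤ cs.length

/-- Every node of the rooted tree has degree at most `D` (the degree of the
root is its number of children; the degree of any other internal node is its
number of children plus one). -/
def DegLE (D : ℕ) (T : PTree α) : Prop :=
  (∀ cs : List (PTree α), T = node cs → cs.length ≤ D) ∧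
  (∀ cs : List (PTree α), Subtree (node cs) T → node cs ≠ T → cs.length + 1 ≤ D)

/-- A rooted tree is binary if every internal node has exactly two children. -/
def Binary (T : PTree α) : Prop :=
  ∀ cs : List (PTree α), Subtree (node cs) T → cs.length = 2

/-- A cut-subtree of `T`: the empty tree, or the tree obtained by selecting
some (at least one) of the subtrees attached to an internal node of `T` and
connecting those subtrees by a common root. -/
def IsCutSubtree (T : PTree α) (a : Option (PTree α)) : Prop :=
  a = none ∨ ∃ cs sel : List (PTree α),
    Subtree (node cs) T ∧ sel.Sublist cs ∧ sel ≠ [] ∧ a = connect sel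

variable {k : ℕ}

/-- A cut-subforest of `𝒯`: each component is a cut-subtree of the
corresponding tree, and at least one component is nonempty. -/
def IsCutSubforest (𝒯 : Fin k → PTree α) (A : Fin k → Option (PTree α)) : Prop :=
  (∀ i, IsCutSubtree (𝒯 i) (A i)) ∧ ∃ i, A i ≠ none

/-- A sub-forest of `𝒯`: each component is the empty tree or a complete
subtree rooted at some node of the corresponding tree, and at least one
component is nonempty. -/
def IsSubForest (𝒯 : Fin k → PTree α) (A : Fin k → Option (PTree α)) : Prop :=
  (∀ i, OSubtree (𝒯 i) (A i)) ∧ ∃ i, A i ≠ none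

/-- The set of all labels occurring in the trees of `𝒯`. -/
def allLabels (𝒯 : Fin k → PTree α) : Finset α :=
  Finset.univ.biUnion fun i => (𝒯 i).labels

/-- A (cut-sub)forest is terminal if each component is the empty tree or a
single leaf of the corresponding tree. -/
def IsTerminal (𝒯 : Fin k → PTree α) (A : Fin k → Option (PTree α)) : Prop :=
  ∀ i, A i = none ∨ ∃ a : α, A i = some (leaf a) ∧ Subtree (leaf a) (𝒯 i)

/-- `Λ(𝒜) = { l ∈ ⋃_j L(𝒜⁽ʲ⁾) ∣ ∀ i, l ∉ L(𝒯⁽ⁱ⁾) − L(𝒜⁽ⁱ⁾) }`. -/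
def lambdaSet (𝒯 : Fin k → PTree α) (A : Fin k → Option (PTree α)) : Finset α :=
  (Finset.univ.biUnion fun j => olabels (A j)).filter
    fun l => ∀ i, l ∉ (𝒯 i).labels \ olabels (A i)

/-- `Y` is a compatible supertree of the forest `A`:
`Y|L(A⁽ⁱ⁾) ⊵ A⁽ⁱ⁾|L(Y)` for every `i`. -/
def IsCompatibleSupertree (A : Fin k → Option (PTree α)) (Y : PTree α) : Prop :=
  ∀ i, ORefines (restrict (olabels (A i)) Y) (orestrict Y.labels (A i))

/-- `X` is an agreement supertree of the forest `A`:
`X|L(A⁽ⁱ⁾) = A⁽ⁱ⁾|L(X)` (as unordered trees) for every `i`. -/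
def IsAgreementSupertree (A : Fin k → Option (PTree α)) (X : PTree α) : Prop :=
  ∀ i, OIso (restrict (olabels (A i)) X) (orestrict X.labels (A i))

/-- An embedded supertree of a cut-subforest `A` of `𝒯`: a distinctly
leaf-labelled compatible supertree `Y` of `A`, with leaves labelled by labels
of `𝒯`, such that `L(Y) ∩ L(𝒯⁽ⁱ⁾) ⊆ L(A⁽ⁱ⁾)` for all `i`. -/
def IsEmbeddedSupertree (𝒯 : Fin k → PTree α) (A : Fin k → Option (PTree α))
    (Y : PTree α) : Prop :=
  Y.labelList.Nodup ∧ Y.labels ⊆ allLabels 𝒯 ∧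
  IsCompatibleSupertree A Y ∧
  ∀ i, Y.labels ∩ (𝒯 i).labels ⊆ olabels (A i)

/-- An enclosed supertree of a sub-forest `A` of `𝒯`: a distinctly
leaf-labelled agreement supertree `X` of `A`, with leaves labelled by labels
of `𝒯`, such that `L(X) ∩ L(𝒯⁽ⁱ⁾) ⊆ L(A⁽ⁱ⁾)` for all `i`. -/
def IsEnclosedSupertree (𝒯 : Fin k → PTree α) (A : Fin k → Option (PTree α))
    (X : PTree α) : Prop :=
  X.labelList.Nodup ∧ X.labels ⊆ allLabels 𝒯 ∧
  IsAgreementSupertree A X ∧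
  ∀ i, X.labels ∩ (𝒯 i).labels ⊆ olabels (A i)

/-- `mcsp 𝒯 A` : the maximum size of an embedded supertree of `A`. -/
noncomputable def mcsp (𝒯 : Fin k → PTree α) (A : Fin k → Option (PTree α)) : ℕ :=
  sSup {m : ℕ | ∃ Y : PTree α, IsEmbeddedSupertree 𝒯 A Y ∧ m = Y.treeSize}

/-- `masp 𝒯 A` : the maximum size of an enclosed supertree of `A`. -/
noncomputable def masp (𝒯 : Fin k → PTree α) (A : Fin k → Option (PTree α)) : ℕ :=
  sSup {m : ℕ | ∃ X : PTree α, IsEnclosedSupertree 𝒯 A X ∧ m = X.treeSize}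

end PTree

/-- `ListSplit s l r` : the list `s` is partitioned into the two
(complementary) sublists `l` and `r`. -/
inductive ListSplit {β : Type} : List β → List β → List β → Prop where
  | nil : ListSplit [] [] []
  | left {s l r : List β} (x : β) : ListSplit s l r → ListSplit (x :: s) (x :: l) r
  | right {s l r : List β} (x : β) : ListSplit s l r → ListSplit (x :: s) l (x :: r)

namespace PTree

variable {α : Type} [DecidableEq α] {k : ℕ}

/-- `(AL, AR)` is a bipartite of the forest `A`: for every `i` the set of
subtrees attached to the root of `A⁽ⁱ⁾` is partitioned into two sets, each of
which is connected by a common root to form `AL⁽ⁱ⁾` resp. `AR⁽ⁱ⁾` (an empty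
set of subtrees yielding the empty tree). -/
def IsBipartite (A AL AR : Fin k → Option (PTree α)) : Prop :=
  ∀ i, ∃ s sL sR : List (PTree α),
    A i = connect s ∧ ListSplit s sL sR ∧ AL i = connect sL ∧ AR i = connect sR

/-- Condition, at one component, for `(b 1, …, b d)` to decompose `a`:
either exactly one `b j` is isomorphic to `a` and the others are empty, or at
least two of the `b j` are nonempty and the nonempty ones are isomorphic to
pairwise distinct subtrees attached to the root of `a`. -/
def DecompAt {d : ℕ} (a : Option (PTree α)) (b : Fin d → Option (PTree α)) : Prop :=
  (∃ j, OIso (b j) a ∧ ∀ j', j' ≠ j → b j' = none) ∨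
  (∃ cs : List (PTree α), a = some (node cs) ∧
    2 ≤ (Finset.univ.filter fun j => (b j).isSome).card ∧
    ∃ idx : Fin d → Option (Fin cs.length),
      (∀ j, b j = none ↔ idx j = none) ∧
      (∀ j t m, b j = some t → idx j = some m → Iso t (cs.get m)) ∧
      (∀ j j' m, idx j = some m → idx j' = some m → j = j'))

/-- `(B 1, …, B d)` is a decomposition of the forest `A` (each `B j` being a
possibly empty sub-forest of `𝒯`). -/
def IsDecomposition (𝒯 : Fin k → PTree α) (A : Fin k → Option (PTree α))
    (d : ℕ) (B : Fin d → Fin k → Option (PTree α)) : Prop :=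
  2 ≤ d ∧ (∀ j i, OSubtree (𝒯 i) (B j i)) ∧ ∀ i, DecompAt (A i) fun j => B j i

/-- The root of the (nonempty) cut-subtree `a` is an internal node of `T`,
i.e. `a` is the complete subtree of `T` rooted at an internal node of `T`. -/
def InternalRooted (T : PTree α) : Option (PTree α) → Prop
  | none => False
  | some t => (∃ cs : List (PTree α), t = node cs) ∧ Subtree t T

/-- One rerooting step: the root is moved to an adjacent internal node. -/
inductive Reroot1 : PTree α → PTree α → Prop where
  | step (l r ds : List (PTree α)) :
      Reroot1 (node (l ++ node ds :: r)) (node (ds ++ [node (l ++ r)]))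

/-- `F` is a rooted variant of the unrooted tree (represented by) `T`:
`F` is obtained by rooting `T` at some internal node. -/
def RootedVariant (T F : PTree α) : Prop := Relation.ReflTransGen Reroot1 T F

/-- A maximal subtree of the unrooted tree (represented by) `T`: a rooted tree
obtained by first rooting `T` at some internal node and then removing at most
one nontrivial subtree attached to that node. -/
def IsMaximalSubtree (T A : PTree α) : Prop :=
  ∃ cs : List (PTree α), RootedVariant T (node cs) ∧
    (A = node cs ∨ ∃ l r ds : List (PTree α), cs = l ++ node ds :: r ∧ A = node (l ++ r))

/-- `T` (a rooted tree, rooted at an internal node) represents an unrooted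
tree without vertices of degree two: the root has at least three neighbours
and every other internal vertex has at least three neighbours as well. -/
def IsUnrootedRep (T : PTree α) : Prop :=
  (∃ cs : List (PTree α), T = node cs ∧ 3 ≤ cs.length) ∧
  ∀ cs : List (PTree α), Subtree (node cs) T → node cs ≠ T → 2 ≤ cs.length

end PTree

/-! In a binary tree every cut-subtree is a complete subtree, since selecting both children of a
node gives back that node. So a component of a cut-subforest whose root is internal is one of the
subtrees of `𝒯⁽ⁱ⁾` rooted at an internal node, of which there are fewer than leaves (no node has
a single child), and any other component is empty or a leaf. Choosing which `r` components are
internal gives the first bound. At each component a bipartite splits a list of at most two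
subtrees connected to it, which leaves at most four pairs, and at most two for an empty or leaf
component. -/

open Finset

theorem prod_le_pow_mul_pow {ι : Type*} [Fintype ι] (p : ι → Prop) {f : ι → ℕ} {a b : ℕ}
    (ha : ∀ i, p i → f i ≤ a) (hb : ∀ i, ¬p i → f i ≤ b) :
    ∏ i, f i ≤ a ^ {i | p i}.ncard * b ^ (Fintype.card ι - {i | p i}.ncard) := by
  classical
  have hS : {i | p i}.ncard = #(univ.filter p) := by
    rw [← Set.ncard_coe_finset, coe_filter_univ]
  rw [hS, ← prod_mul_prod_compl (univ.filter p), ← card_compl]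
  gcongr
  · exact prod_le_pow_card _ _ _ fun i hi => ha i (mem_filter.1 hi).2
  · exact prod_le_pow_card _ _ _ fun i hi => hb i (by simpa using hi)

theorem ncard_le_choose_mul_pow_mul_pow {ι β : Type*} [Fintype ι]
    {s : Set (ι → β)} (P : ι → β → Prop) (I E : ι → Finset β) {a b r : ℕ}
    (hI : ∀ i, #(I i) ≤ a) (hE : ∀ i, #(E i) ≤ b)
    (hsI : ∀ f ∈ s, ∀ i, P i (f i) → f i ∈ I i) (hsE : ∀ f ∈ s, ∀ i, ¬P i (f i) → f i ∈ E i)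
    (hr : ∀ f ∈ s, {i | P i (f i)}.ncard = r) :
    s.ncard ≤ (Fintype.card ι).choose r * a ^ r * b ^ (Fintype.card ι - r) := by
  classical
  set piOf : Finset ι → Finset (ι → β) :=
    fun S => Fintype.piFinset fun i => if i ∈ S then I i else E i
  have hcover : s ⊆ ((powersetCard r univ).biUnion piOf : Set (ι → β)) := by
    intro f hf
    refine mem_coe.2 (mem_biUnion.2 ⟨univ.filter fun i => P i (f i), ?_, ?_⟩)
    · rw [mem_powersetCard, ← hr f hf, ← Set.ncard_coe_finset, coe_filter_univ]
      exact ⟨subset_univ _, rfl⟩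
    · refine Fintype.mem_piFinset.2 fun i => ?_
      by_cases h : P i (f i) <;> simp [h, hsI f hf i, hsE f hf i]
  have hpiOf : ∀ S ∈ powersetCard r univ, #(piOf S) ≤ a ^ r * b ^ (Fintype.card ι - r) := by
    intro S hS
    rw [Fintype.card_piFinset, ← (mem_powersetCard.1 hS).2]
    simpa using prod_le_pow_mul_pow (f := fun i => #(if i ∈ S then I i else E i)) (· ∈ S)
      (fun i hi => by simpa [hi] using hI i) (fun i hi => by simpa [hi] using hE i)
  calc s.ncard ≤ #((powersetCard r univ).biUnion piOf) :=
        (Set.ncard_le_ncard hcover (Finset.finite_toSet _)).trans_eq (Set.ncard_coe_finset _)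
    _ ≤ ∑ S ∈ powersetCard r univ, #(piOf S) := card_biUnion_le
    _ ≤ #(powersetCard r univ) * (a ^ r * b ^ (Fintype.card ι - r)) :=
        sum_le_card_nsmul _ _ _ hpiOf
    _ = _ := by rw [card_powersetCard, card_univ, mul_assoc]

theorem List.length_flatMap_add_length_le {β γ δ : Type*} {l : List β} {f : β → List γ}
    {g : β → List δ} (h : ∀ x ∈ l, (f x).length < (g x).length) :
    (l.flatMap f).length + l.length ≤ (l.flatMap g).length := by
  induction l with
  | nil => simp
  | cons x l ih =>
    have := h x List.mem_cons_self
    have := ih fun y hy => h y (List.mem_cons_of_mem _ hy)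
    simp only [List.flatMap_cons, List.length_append, List.length_cons]
    omega

namespace PTree

variable {α : Type}

theorem Subtree.trans {s t u : PTree α} (h₁ : Subtree s t) (h₂ : Subtree t u) : Subtree s u := by
  induction h₂ with
  | refl => exact h₁
  | child hc _ ih => exact .child hc ih

theorem NoUnaryNodes.of_mem {c : PTree α} {cs : List (PTree α)} (h : NoUnaryNodes (node cs))
    (hc : c ∈ cs) : NoUnaryNodes c :=
  fun ds hds => h ds (.child hc hds)

theorem labelList_node (cs : List (PTree α)) : labelList (node cs) = cs.flatMap labelList := by
  rw [labelList]
  conv_rhs => rw [← List.attach_map_subtype_val cs]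
  rw [List.flatMap_map]

theorem Subtree.labels_subset [DecidableEq α] {s T : PTree α} (h : Subtree s T) :
    s.labels ⊆ T.labels := by
  induction h with
  | refl => exact subset_rfl
  | child hc _ ih =>
    refine ih.trans fun x hx => ?_
    simp only [labels, List.mem_toFinset, labelList_node, List.mem_flatMap] at hx ⊢
    exact ⟨_, hc, hx⟩

def internalSubtrees : PTree α → List (PTree α)
  | leaf _ => []
  | node cs => node cs :: cs.flatMap internalSubtrees

theorem internalSubtrees_node (cs : List (PTree α)) :
    internalSubtrees (node cs) = node cs :: cs.flatMap internalSubtrees := by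
  rw [internalSubtrees]

theorem mem_internalSubtrees {s T : PTree α} (h : Subtree s T) (hs : ∃ cs, s = node cs) :
    s ∈ internalSubtrees T := by
  induction h with
  | refl => obtain ⟨cs, rfl⟩ := hs; simp [internalSubtrees_node]
  | child hc _ ih =>
    rw [internalSubtrees_node]
    exact List.mem_cons_of_mem _ (List.mem_flatMap.2 ⟨_, hc, ih⟩)

theorem length_internalSubtrees_lt : ∀ {T : PTree α}, NoUnaryNodes T →
    (internalSubtrees T).length < T.labelList.length
  | leaf _, _ => by simp [internalSubtrees, labelList]
  | node cs, hT => by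
    have := List.length_flatMap_add_length_le (f := internalSubtrees) (g := labelList)
      fun c hc => length_internalSubtrees_lt (hT.of_mem hc)
    have := hT cs (.refl _)
    rw [internalSubtrees_node, labelList_node, List.length_cons]
    omega
decreasing_by exact sizeOf_lt_of_mem hc

theorem IsCutSubtree.subtree {T t : PTree α} (hT : Binary T) (h : IsCutSubtree T (some t)) :
    Subtree t T := by
  obtain h | ⟨cs, sel, hcs, hsel, hne, ht⟩ := h
  · cases h
  match sel, hne, ht with
  | [c], _, ht =>
    obtain rfl : t = c := by simpa [connect] using ht
    exact (Subtree.child (hsel.subset List.mem_cons_self) (.refl t)).trans hcs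
  | c :: d :: l, _, ht =>
    obtain rfl : t = node (c :: d :: l) := by simpa [connect] using ht
    have hlen : (c :: d :: l).length = cs.length := by
      have := hsel.length_le
      have := hT cs hcs
      simp only [List.length_cons] at *
      omega
    rwa [hsel.eq_of_length hlen]

theorem IsCutSubtree.binary {T t : PTree α} (hT : Binary T) (h : IsCutSubtree T (some t)) :
    Binary t :=
  fun cs hcs => hT cs (hcs.trans (h.subtree hT))

open Classical in
noncomputable def internalComponents (T : PTree α) : Finset (Option (PTree α)) :=
  ((internalSubtrees T).map some).toFinset

theorem InternalRooted.mem_internalComponents {T : PTree α} {a : Option (PTree α)}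
    (h : InternalRooted T a) : a ∈ internalComponents T := by
  obtain _ | t := a
  · exact h.elim
  · simpa [internalComponents] using mem_internalSubtrees h.2 h.1

theorem card_internalComponents_le {T : PTree α} (hT : NoUnaryNodes T) :
    #(internalComponents T) ≤ T.labelList.length - 1 := by
  classical
  have := length_internalSubtrees_lt hT
  have := List.toFinset_card_le ((internalSubtrees T).map some)
  simp only [List.length_map] at this
  unfold internalComponents
  omega

open Classical in
noncomputable def leafComponents [DecidableEq α] (T : PTree α) : Finset (Option (PTree α)) :=
  insert none (T.labels.image fun x => some (leaf x))

theorem IsCutSubtree.mem_leafComponents [DecidableEq α] {T : PTree α} {a : Option (PTree α)}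
    (hT : Binary T) (ha : IsCutSubtree T a) (h : ¬InternalRooted T a) : a ∈ leafComponents T := by
  obtain _ | (x | cs) := a
  · simp [leafComponents]
  · simpa [leafComponents, labels, labelList] using (ha.subtree hT).labels_subset
  · exact (h ⟨⟨cs, rfl⟩, ha.subtree hT⟩).elim

theorem card_leafComponents_le [DecidableEq α] (T : PTree α) :
    #(leafComponents T) ≤ T.labelList.length + 1 := by
  classical
  exact (card_insert_le _ _).trans <|
    Nat.add_le_add_right (card_image_le.trans (List.toFinset_card_le _)) 1

-- `some (node [c₁, c₂])` is both `connect [node [c₁, c₂]]` and `connect [c₁, c₂]`.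
def bipartitePairs : Option (PTree α) → List (Option (PTree α) × Option (PTree α))
  | none => [(none, none)]
  | some t => [(some t, none), (none, some t)] ++
      match t with
      | node [c₁, c₂] => [(some c₁, some c₂), (some c₂, some c₁)]
      | _ => []

theorem length_bipartitePairs_le (a : Option (PTree α)) : (bipartitePairs a).length ≤ 4 := by
  rcases a with _ | _ | (_ | ⟨_, _ | ⟨_, _ | _⟩⟩) <;> simp [bipartitePairs]

theorem length_bipartitePairs_le_two [DecidableEq α] {T : PTree α} {a : Option (PTree α)}
    (ha : a ∈ leafComponents T) : (bipartitePairs a).length ≤ 2 := by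
  obtain rfl | ⟨x, -, rfl⟩ : a = none ∨ ∃ x ∈ T.labels, some (leaf x) = a := by
    simpa [leafComponents] using ha
  all_goals simp [bipartitePairs]

theorem connect_mem_bipartitePairs {a : Option (PTree α)} (ha : ∀ t ∈ a, Binary t)
    {s sL sR : List (PTree α)} (hs : a = connect s) (hsplit : ListSplit s sL sR) :
    (connect sL, connect sR) ∈ bipartitePairs a := by
  match s, hsplit with
  | [], .nil => simp [hs, connect, bipartitePairs]
  | [u], hsplit =>
    rcases hsplit with _ | ⟨_, ⟨⟩⟩ | ⟨_, ⟨⟩⟩ <;> simp [hs, connect, bipartitePairs]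
  | u :: v :: l, hsplit =>
    obtain rfl : l = [] := by
      simpa using ha _ (by simp [hs, connect]) (u :: v :: l) (.refl _)
    rcases hsplit with _ | ⟨_, _ | ⟨_, ⟨⟩⟩ | ⟨_, ⟨⟩⟩⟩ | ⟨_, _ | ⟨_, ⟨⟩⟩ | ⟨_, ⟨⟩⟩⟩ <;>
      simp [hs, connect, bipartitePairs]

theorem ncard_setOf_isBipartite_le {k : ℕ} (A : Fin k → Option (PTree α))
    (hA : ∀ i, ∀ t ∈ A i, Binary t) :
    {p : (Fin k → Option (PTree α)) × (Fin k → Option (PTree α)) | IsBipartite A p.1 p.2}.ncard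
      ≤ ∏ i, (bipartitePairs (A i)).length := by
  classical
  let e := (Equiv.arrowProdEquivProdArrow (Fin k) (fun _ => Option (PTree α))
    fun _ => Option (PTree α)).symm
  calc _ ≤ #(Fintype.piFinset fun i => (bipartitePairs (A i)).toFinset) := by
        refine (Set.ncard_le_ncard_of_injOn e (fun p hp => ?_) e.injective.injOn
          (Finset.finite_toSet _)).trans_eq (Set.ncard_coe_finset _)
        refine mem_coe.2 (Fintype.mem_piFinset.2 fun i => List.mem_toFinset.2 ?_)
        obtain ⟨s, sL, sR, hs, hsplit, hL, hR⟩ := hp i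
        simpa [e, hL, hR] using connect_mem_bipartitePairs (hA i) hs hsplit
    _ ≤ ∏ i, (bipartitePairs (A i)).length := by
        rw [Fintype.card_piFinset]
        exact prod_le_prod' fun i _ => List.toFinset_card_le _

end PTree

theorem maximum_agreement_supertree_stmt8_general
    {α : Type} [DecidableEq α] {k n : ℕ} (𝒯 : Fin k → PTree α)
    (hbin : ∀ i, PTree.Binary (𝒯 i))
    (hnodeg2 : ∀ i, PTree.NoUnaryNodes (𝒯 i))
    (hn : ∀ i, (𝒯 i).labelList.length ≤ n)
    (r : ℕ) :
    {A : Fin k → Option (PTree α) | PTree.IsCutSubforest 𝒯 A ∧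
        {i : Fin k | PTree.InternalRooted (𝒯 i) (A i)}.ncard = r}.ncard
      ≤ k.choose r * (n - 1) ^ r * (n + 1) ^ (k - r) ∧
    ∀ A : Fin k → Option (PTree α), PTree.IsCutSubforest 𝒯 A →
      {i : Fin k | PTree.InternalRooted (𝒯 i) (A i)}.ncard = r →
      {p : (Fin k → Option (PTree α)) × (Fin k → Option (PTree α)) |
          PTree.IsBipartite A p.1 p.2}.ncard ≤ 4 ^ r * 2 ^ (k - r) := by
  constructor
  · simpa using ncard_le_choose_mul_pow_mul_pow (fun i => PTree.InternalRooted (𝒯 i))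
      (fun i => PTree.internalComponents (𝒯 i)) (fun i => PTree.leafComponents (𝒯 i))
      (fun i => (PTree.card_internalComponents_le (hnodeg2 i)).trans
        (Nat.sub_le_sub_right (hn i) 1))
      (fun i => (PTree.card_leafComponents_le _).trans (Nat.add_le_add_right (hn i) 1))
      (fun _ _ _ h => PTree.InternalRooted.mem_internalComponents h)
      (fun A hA i h => PTree.IsCutSubtree.mem_leafComponents (hbin i) (hA.1.1 i) h)
      (fun _ hA => hA.2)
  · intro A hA hr
    have hleaf : ∀ i, ¬PTree.InternalRooted (𝒯 i) (A i) → A i ∈ PTree.leafComponents (𝒯 i) :=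
      fun i => PTree.IsCutSubtree.mem_leafComponents (hbin i) (hA.1 i)
    have hbinA : ∀ i, ∀ t ∈ A i, PTree.Binary t := fun i t ht =>
      PTree.IsCutSubtree.binary (hbin i) (Option.mem_def.1 ht ▸ hA.1 i)
    calc _ ≤ ∏ i, (PTree.bipartitePairs (A i)).length := PTree.ncard_setOf_isBipartite_le A hbinA
      _ ≤ 4 ^ r * 2 ^ (k - r) := by
        simpa [hr] using prod_le_pow_mul_pow (fun i => PTree.InternalRooted (𝒯 i) (A i))
          (fun i _ => PTree.length_bipartitePairs_le _)
          (fun i h => PTree.length_bipartitePairs_le_two (hleaf i h))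

/-- For `k` rooted binary phylogenetic trees with at most `n`
leaves each and an integer `0 ≤ r ≤ k`: the number of cut-subforests of `𝒯`
having exactly `r` components whose roots are internal nodes of the
corresponding tree is at most `C(k,r)·(n−1)^r·(n+1)^(k−r)`, and each such
cut-subforest has at most `4^r·2^(k−r)` bipartites. -/
theorem maximum_agreement_supertree_stmt8
    {α : Type} [DecidableEq α] {k n : ℕ} (𝒯 : Fin k → PTree α)
    (hphylo : ∀ i, (𝒯 i).labelList.Nodup)
    (hbin : ∀ i, PTree.Binary (𝒯 i))
    (hnodeg2 : ∀ i, PTree.NoUnaryNodes (𝒯 i))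
    (hn : ∀ i, (𝒯 i).labelList.length ≤ n) (hn1 : 1 ≤ n)
    (r : ℕ) (hr : r ≤ k) :
    {A : Fin k → Option (PTree α) | PTree.IsCutSubforest 𝒯 A ∧
        {i : Fin k | PTree.InternalRooted (𝒯 i) (A i)}.ncard = r}.ncard
      ≤ k.choose r * (n - 1) ^ r * (n + 1) ^ (k - r) ∧
    ∀ A : Fin k → Option (PTree α), PTree.IsCutSubforest 𝒯 A →
      {i : Fin k | PTree.InternalRooted (𝒯 i) (A i)}.ncard = r →
      {p : (Fin k → Option (PTree α)) × (Fin k → Option (PTree α)) |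
          PTree.IsBipartite A p.1 p.2}.ncard ≤ 4 ^ r * 2 ^ (k - r) :=
  maximum_agreement_supertree_stmt8_general 𝒯 hbin hnodeg2 hn r
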